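/- arXiv:1108.0243 — 9 statements merged into one kernel-verified Lean document; each statement's English description precedes it below -/
import Mathlib

section
/- Consider the key predistribution construction from t designs. Assume (a) every block has at least t symbols: for all i and β, |𝐁 i β| ≥ t; (b) any two blocks of the same design with distinct indices share at most one symbol: for all i and β ≠ β', |𝐁 i β ∩ 𝐁 i β'| ≤ 1; and (c) there are constants θ₂ i such that for every i and every index β, exactly θ₂ i indices β' ≠ β satisfy |𝐁 i β ∩ 𝐁 i β'| = 1. Set θ₀ i := 1, θ₁ i := b i − 1 − θ₂ i. Let Δ be the set of tuples j : Fin t → {0,1,2} that are not identically 0 and satisfy: j i = 0 for at least one i, or j i = 2 for all i. Then for every node α, the number of nodes α' ≠ α sharing at least t keys with α, i.e. with Σ_{i} |𝐁 i (α i) ∩ 𝐁 i (α' i)| ≥ t, equals Σ_{j ∈ Δ} Π_{i} θ_{j i} i. -/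
/-- Theorem 1 of the paper (counting content): in the key-predistribution construction
from `t` designs, for every node `α`, the number of nodes `α' ≠ α` sharing at least `t`
keys with `α` equals `∑ j ∈ Δ, ∏ i, θ_{j i}(i)`, where `Δ` is the set of non-zero tuples
`j : Fin t → Fin 3` having some coordinate `0` or all coordinates `2`, and
`θ₀ i = 1`, `θ₁ i = b i - 1 - θ₂ i`. -/
theorem stmt_0 (t : ℕ) (ht : 1 ≤ t) (V : Fin t → Type*) [∀ i, DecidableEq (V i)]
    (b : Fin t → ℕ) (B : ∀ i, Fin (b i) → Finset (V i))
    (hsize : ∀ i β, t ≤ (B i β).card)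
    (hint : ∀ i (β β' : Fin (b i)), β ≠ β' → (B i β ∩ B i β').card ≤ 1)
    (θ₂ : Fin t → ℕ)
    (hθ₂ : ∀ i (β : Fin (b i)),
      (Finset.univ.filter fun β' => β' ≠ β ∧ (B i β ∩ B i β').card = 1).card = θ₂ i)
    (α : ∀ i, Fin (b i)) :
    (Finset.univ.filter fun α' : ∀ i, Fin (b i) =>
        α' ≠ α ∧ t ≤ ∑ i, (B i (α i) ∩ B i (α' i)).card).card
      = ∑ j ∈ (Finset.univ.filter fun j : Fin t → Fin 3 =>
            (∃ i, j i ≠ 0) ∧ ((∃ i, j i = 0) ∨ ∀ i, j i = 2)),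
          ∏ i, (if j i = 0 then 1 else if j i = 1 then b i - 1 - θ₂ i else θ₂ i) := by
  classical
  set cls : ∀ i, Fin (b i) → Fin 3 := fun i β =>
    if β = α i then 0 else if (B i (α i) ∩ B i β).card = 1 then 2 else 1 with hcls
  have hc0 : ∀ i β, cls i β = 0 ↔ β = α i := by
    intro i β
    simp only [hcls]
    split
    · simp [*]
    · split <;> simp [*]
  have hc2 : ∀ i β, cls i β = 2 ↔ (β ≠ α i ∧ (B i (α i) ∩ B i β).card = 1) := by
    intro i β
    simp only [hcls]
    split
    · simp [*]
    · split <;> simp [*]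
  have hc1 : ∀ i β, cls i β = 1 ↔ (β ≠ α i ∧ (B i (α i) ∩ B i β).card ≠ 1) := by
    intro i β
    simp only [hcls]
    split
    · simp [*]
    · split <;> simp [*]
  -- the key equivalence
  have key : ∀ α' : ∀ i, Fin (b i),
      (α' ≠ α ∧ t ≤ ∑ i, (B i (α i) ∩ B i (α' i)).card) ↔
      ((∃ i, cls i (α' i) ≠ 0) ∧
        ((∃ i, cls i (α' i) = 0) ∨ ∀ i, cls i (α' i) = 2)) := by
    intro α'
    have hne : α' ≠ α ↔ ∃ i, cls i (α' i) ≠ 0 := by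
      rw [Ne, funext_iff]
      push_neg
      exact exists_congr fun i => (not_congr (hc0 i (α' i))).symm
    constructor
    · rintro ⟨h1, h2⟩
      refine ⟨hne.mp h1, ?_⟩
      by_cases h0 : ∃ i, cls i (α' i) = 0
      · exact Or.inl h0
      · push_neg at h0
        right
        have hle : ∀ i ∈ Finset.univ, (B i (α i) ∩ B i (α' i)).card ≤ 1 := by
          intro i _
          have : α' i ≠ α i := fun h => h0 i ((hc0 i (α' i)).mpr h)
          exact hint i (α i) (α' i) (Ne.symm this)
        have hsum_le : ∑ i, (B i (α i) ∩ B i (α' i)).card ≤ t := by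
          calc ∑ i, (B i (α i) ∩ B i (α' i)).card ≤ ∑ _i : Fin t, 1 :=
                Finset.sum_le_sum hle
            _ = t := by simp
        have heq : ∑ i, (B i (α i) ∩ B i (α' i)).card = ∑ _i : Fin t, (1:ℕ) := by
          have := le_antisymm hsum_le h2
          simpa using this
        have hall := (Finset.sum_eq_sum_iff_of_le hle).mp (by simpa using heq)
        intro i
        have hcard : (B i (α i) ∩ B i (α' i)).card = 1 := hall i (Finset.mem_univ i)
        have hnei : α' i ≠ α i := fun h => h0 i ((hc0 i (α' i)).mpr h)
        exact (hc2 i (α' i)).mpr ⟨hnei, hcard⟩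
    · rintro ⟨h1, h2⟩
      refine ⟨hne.mpr h1, ?_⟩
      rcases h2 with ⟨i, hi⟩ | hall
      · have hii : α' i = α i := (hc0 i (α' i)).mp hi
        have : t ≤ (B i (α i) ∩ B i (α' i)).card := by
          rw [hii, Finset.inter_self]
          exact hsize i (α i)
        calc t ≤ (B i (α i) ∩ B i (α' i)).card := this
          _ ≤ ∑ i, (B i (α i) ∩ B i (α' i)).card :=
            Finset.single_le_sum (f := fun k => (B k (α k) ∩ B k (α' k)).card)
              (fun _ _ => Nat.zero_le _) (Finset.mem_univ i)
      · have : ∀ i, (B i (α i) ∩ B i (α' i)).card = 1 := fun i =>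
          ((hc2 i (α' i)).mp (hall i)).2
        simp [this]
  -- per-coordinate counts
  have count : ∀ (i : Fin t) (v : Fin 3),
      (Finset.univ.filter fun β : Fin (b i) => cls i β = v).card
        = (if v = 0 then 1 else if v = 1 then b i - 1 - θ₂ i else θ₂ i) := by
    intro i v
    have hb1 : 1 ≤ b i := Nat.pos_of_ne_zero (fun h => (h ▸ (α i)).elim0)
    have c0 : (Finset.univ.filter fun β : Fin (b i) => cls i β = 0).card = 1 := by
      have : (Finset.univ.filter fun β : Fin (b i) => cls i β = 0)
          = {α i} := by
        ext β; simp [hc0]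
      simp [this]
    have c2 : (Finset.univ.filter fun β : Fin (b i) => cls i β = 2).card = θ₂ i := by
      have : (Finset.univ.filter fun β : Fin (b i) => cls i β = 2)
          = Finset.univ.filter fun β => β ≠ α i ∧ (B i (α i) ∩ B i β).card = 1 := by
        ext β; simp [hc2]
      rw [this, hθ₂ i (α i)]
    have c1 : (Finset.univ.filter fun β : Fin (b i) => cls i β = 1).card
        = b i - 1 - θ₂ i := by
      have hdisj : (Finset.univ.filter fun β : Fin (b i) => cls i β = 1)
          = (Finset.univ.filter fun β : Fin (b i) => β ≠ α i) \
            (Finset.univ.filter fun β : Fin (b i) => cls i β = 2) := by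
        ext β
        simp only [Finset.mem_sdiff, Finset.mem_filter, Finset.mem_univ, true_and,
          hc1, hc2]
        tauto
      have hsub : (Finset.univ.filter fun β : Fin (b i) => cls i β = 2) ⊆
          (Finset.univ.filter fun β : Fin (b i) => β ≠ α i) := by
        intro β hβ
        simp only [Finset.mem_filter, Finset.mem_univ, true_and, hc2] at hβ ⊢
        exact hβ.1
      have hcardne : (Finset.univ.filter fun β : Fin (b i) => β ≠ α i).card
          = b i - 1 := by
        rw [Finset.filter_ne', Finset.card_erase_of_mem (Finset.mem_univ _)]
        simp
      rw [hdisj, Finset.card_sdiff_of_subset hsub, hcardne, c2]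
    obtain ⟨v, hv⟩ := v
    interval_cases v <;> simpa using (by assumption : _)
  -- fiber cardinality
  have fiber : ∀ j : Fin t → Fin 3,
      (Finset.univ.filter fun α' : ∀ i, Fin (b i) => ∀ i, cls i (α' i) = j i).card
        = ∏ i, (Finset.univ.filter fun β : Fin (b i) => cls i β = j i).card := by
    intro j
    rw [← Fintype.card_subtype]
    rw [Fintype.card_congr (Equiv.subtypePiEquivPi (p := fun i β => cls i β = j i))]
    rw [Fintype.card_pi]
    simp [Fintype.card_subtype]
  -- decompose fiberwise
  rw [Finset.card_eq_sum_card_fiberwise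
    (f := fun α' i => cls i (α' i))
    (t := Finset.univ.filter fun j : Fin t → Fin 3 =>
      (∃ i, j i ≠ 0) ∧ ((∃ i, j i = 0) ∨ ∀ i, j i = 2))
    (fun α' hα' => by
      simp only [Finset.mem_coe, Finset.mem_filter, Finset.mem_univ, true_and] at hα' ⊢
      exact (key α').mp hα')]
  refine Finset.sum_congr rfl fun j hj => ?_
  simp only [Finset.mem_filter, Finset.mem_univ, true_and] at hj
  have hfe : ((Finset.univ.filter fun α' : ∀ i, Fin (b i) =>
        α' ≠ α ∧ t ≤ ∑ i, (B i (α i) ∩ B i (α' i)).card).filter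
          fun α' => (fun i => cls i (α' i)) = j)
      = Finset.univ.filter fun α' : ∀ i, Fin (b i) => ∀ i, cls i (α' i) = j i := by
    ext α'
    simp only [Finset.mem_filter, Finset.mem_univ, true_and, funext_iff]
    constructor
    · rintro ⟨_, h⟩; exact h
    · intro h
      refine ⟨(key α').mpr ?_, h⟩
      constructor
      · obtain ⟨i, hi⟩ := hj.1
        exact ⟨i, by rw [h i]; exact hi⟩
      · rcases hj.2 with ⟨i, hi⟩ | hall
        · exact Or.inl ⟨i, by rw [h i]; exact hi⟩
        · exact Or.inr fun i => by rw [h i]; exact hall i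
  rw [hfe, fiber j]
  exact Finset.prod_congr rfl fun i _ => count i (j i)
end

section
/- Consider the key predistribution construction from t designs. For block indices β, β' of design i, say they are 0th associates if β = β', 2nd associates if β ≠ β' and |𝐁 i β ∩ 𝐁 i β'| = 1, and 1st associates if |𝐁 i β ∩ 𝐁 i β'| = 0. Assume every block has at least t symbols, any two blocks of the same design with distinct indices share at most one symbol, and there are functions φ i : {0,1,2}³ → ℕ such that for every i, every pair of block indices β, β' of design i that are j-th associates, and every u, w ∈ {0,1,2}, the number of block indices γ of design i that are u-th associates of β and w-th associates of β' equals φ i j u w. Let Δ be the set of tuples in {0,1,2}^t that are not identically 0 and have some coordinate 0 or all coordinates 2. Then for any two distinct nodes α, α' whose per-design associate classes are j i, the number of nodes γ with γ ≠ α, γ ≠ α', Σ_i |𝐁 i (γ i) ∩ 𝐁 i (α i)| ≥ t and Σ_i |𝐁 i (γ i) ∩ 𝐁 i (α' i)| ≥ t equals Σ_{u ∈ Δ} Σ_{w ∈ Δ} Π_i φ i (j i) (u i) (w i). -/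
/-- The associate class of two block indices `β, β'` of a design: `0` if `β = β'`,
`2` if `β ≠ β'` and the blocks share exactly one symbol, `1` otherwise (no common symbol,
under the at-most-one-common-symbol assumption). -/
def assocClass {V : Type*} [DecidableEq V] {n : ℕ} (B : Fin n → Finset V)
    (β β' : Fin n) : Fin 3 :=
  if β = β' then 0 else if (B β ∩ B β').card = 1 then 2 else 1

lemma assocClass_eq_zero_iff {V : Type*} [DecidableEq V] {n : ℕ} (B : Fin n → Finset V)
    (β β' : Fin n) : assocClass B β β' = 0 ↔ β = β' := by
  unfold assocClass
  split_ifs <;> simp_all <;> decide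

lemma card_of_assocClass_two {V : Type*} [DecidableEq V] {n : ℕ} (B : Fin n → Finset V)
    {β β' : Fin n} (h : assocClass B β β' = 2) : (B β ∩ B β').card = 1 := by
  unfold assocClass at h
  split_ifs at h with h1 h2
  · exact absurd h (by decide)
  · exact h2
  · exact absurd h (by decide)

lemma card_of_assocClass_one {V : Type*} [DecidableEq V] {n : ℕ} (B : Fin n → Finset V)
    (hint : ∀ β β' : Fin n, β ≠ β' → (B β ∩ B β').card ≤ 1)
    {β β' : Fin n} (h : assocClass B β β' = 1) : (B β ∩ B β').card = 0 := by
  unfold assocClass at h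
  split_ifs at h with h1 h2
  · exact absurd h (by decide)
  · exact absurd h (by decide)
  · have := hint β β' h1
    omega

lemma key_iff {t : ℕ} {V : Fin t → Type*} [∀ i, DecidableEq (V i)]
    {b : Fin t → ℕ} (B : ∀ i, Fin (b i) → Finset (V i))
    (hsize : ∀ i β, t ≤ (B i β).card)
    (hint : ∀ i (β β' : Fin (b i)), β ≠ β' → (B i β ∩ B i β').card ≤ 1)
    (γ δ : ∀ i, Fin (b i)) :
    (γ ≠ δ ∧ t ≤ ∑ i, (B i (γ i) ∩ B i (δ i)).card) ↔
      ((∃ i, assocClass (B i) (γ i) (δ i) ≠ 0) ∧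
       ((∃ i, assocClass (B i) (γ i) (δ i) = 0) ∨
        ∀ i, assocClass (B i) (γ i) (δ i) = 2)) := by
  have hne : γ ≠ δ ↔ ∃ i, assocClass (B i) (γ i) (δ i) ≠ 0 := by
    rw [Function.ne_iff]
    exact exists_congr fun i => (not_congr (assocClass_eq_zero_iff (B i) (γ i) (δ i))).symm
  have main : (t ≤ ∑ i, (B i (γ i) ∩ B i (δ i)).card) ↔
      ((∃ i, assocClass (B i) (γ i) (δ i) = 0) ∨ ∀ i, assocClass (B i) (γ i) (δ i) = 2) := by
    constructor
    · intro h2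
      by_cases h0 : ∃ i, assocClass (B i) (γ i) (δ i) = 0
      · exact Or.inl h0
      · right
        push_neg at h0
        have hneq : ∀ i, γ i ≠ δ i := fun i he =>
          h0 i ((assocClass_eq_zero_iff (B i) (γ i) (δ i)).mpr he)
        have hle : ∀ i, (B i (γ i) ∩ B i (δ i)).card ≤ 1 := fun i => hint i _ _ (hneq i)
        have hsum : ∑ i, (B i (γ i) ∩ B i (δ i)).card ≤ t := by
          calc ∑ i, (B i (γ i) ∩ B i (δ i)).card ≤ ∑ _i : Fin t, 1 :=
                Finset.sum_le_sum fun i _ => hle i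
            _ = t := by simp
        have heq : ∀ i, (B i (γ i) ∩ B i (δ i)).card = 1 := by
          have hs : ∑ i, (B i (γ i) ∩ B i (δ i)).card = ∑ _i : Fin t, 1 := by
            have : (∑ _i : Fin t, 1) = t := by simp
            omega
          intro i
          exact (Finset.sum_eq_sum_iff_of_le (fun i _ => hle i)).mp hs i (Finset.mem_univ i)
        intro i
        unfold assocClass
        rw [if_neg (hneq i), if_pos (heq i)]
    · rintro (⟨i, hi⟩ | h)
      · have he : γ i = δ i := (assocClass_eq_zero_iff (B i) (γ i) (δ i)).mp hi
        have h1 : t ≤ (B i (γ i) ∩ B i (δ i)).card := by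
          rw [he, Finset.inter_self]; exact hsize i _
        exact le_trans h1 (Finset.single_le_sum (f := fun k => (B k (γ k) ∩ B k (δ k)).card)
          (fun k _ => Nat.zero_le _) (Finset.mem_univ i))
      · have : ∀ i, (B i (γ i) ∩ B i (δ i)).card = 1 := fun i =>
          card_of_assocClass_two (B i) (h i)
        calc t = ∑ _i : Fin t, 1 := by simp
          _ = ∑ i, (B i (γ i) ∩ B i (δ i)).card := by
              exact Finset.sum_congr rfl fun i _ => (this i).symm
          _ ≤ _ := le_refl _
  rw [hne, main]

/-- Lemma 2 of the paper together with the product formula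
`p^{j₁…j_t}_{u₁…u_t,w₁…w_t} = ∏ i, φ^{j_i}_{u_i,w_i}(i)`: for two distinct nodes `α, α'`
of associate class tuple `j`, the number of nodes sharing at least `t` keys with both of
them equals `∑_{u ∈ Δ} ∑_{w ∈ Δ} ∏ i, φ i (j i) (u i) (w i)`. -/
theorem stmt_1 (t : ℕ) (ht : 1 ≤ t) (V : Fin t → Type*) [∀ i, DecidableEq (V i)]
    (b : Fin t → ℕ) (B : ∀ i, Fin (b i) → Finset (V i))
    (hsize : ∀ i β, t ≤ (B i β).card)
    (hint : ∀ i (β β' : Fin (b i)), β ≠ β' → (B i β ∩ B i β').card ≤ 1)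
    (φ : Fin t → Fin 3 → Fin 3 → Fin 3 → ℕ)
    (hφ : ∀ i (β β' : Fin (b i)) (u w : Fin 3),
      (Finset.univ.filter fun γ : Fin (b i) =>
          assocClass (B i) γ β = u ∧ assocClass (B i) γ β' = w).card
        = φ i (assocClass (B i) β β') u w)
    (α α' : ∀ i, Fin (b i)) (hαα' : α ≠ α')
    (j : Fin t → Fin 3) (hj : ∀ i, assocClass (B i) (α i) (α' i) = j i) :
    (Finset.univ.filter fun γ : ∀ i, Fin (b i) =>
        γ ≠ α ∧ γ ≠ α' ∧
        t ≤ ∑ i, (B i (γ i) ∩ B i (α i)).card ∧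
        t ≤ ∑ i, (B i (γ i) ∩ B i (α' i)).card).card
      = ∑ u ∈ (Finset.univ.filter fun u : Fin t → Fin 3 =>
            (∃ i, u i ≠ 0) ∧ ((∃ i, u i = 0) ∨ ∀ i, u i = 2)),
          ∑ w ∈ (Finset.univ.filter fun w : Fin t → Fin 3 =>
            (∃ i, w i ≠ 0) ∧ ((∃ i, w i = 0) ∨ ∀ i, w i = 2)),
          ∏ i, φ i (j i) (u i) (w i) := by
  classical
  set Δ : Finset (Fin t → Fin 3) := Finset.univ.filter fun u : Fin t → Fin 3 =>
      (∃ i, u i ≠ 0) ∧ ((∃ i, u i = 0) ∨ ∀ i, u i = 2) with hΔ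
  set f : (∀ i, Fin (b i)) → (Fin t → Fin 3) × (Fin t → Fin 3) := fun γ =>
      ((fun i => assocClass (B i) (γ i) (α i)), fun i => assocClass (B i) (γ i) (α' i)) with hf
  set s : Finset (∀ i, Fin (b i)) := Finset.univ.filter fun γ : ∀ i, Fin (b i) =>
        γ ≠ α ∧ γ ≠ α' ∧
        t ≤ ∑ i, (B i (γ i) ∩ B i (α i)).card ∧
        t ≤ ∑ i, (B i (γ i) ∩ B i (α' i)).card with hs
  have hmem : ∀ γ, γ ∈ s ↔ (f γ).1 ∈ Δ ∧ (f γ).2 ∈ Δ := by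
    intro γ
    have k1 := key_iff B hsize hint γ α
    have k2 := key_iff B hsize hint γ α'
    simp only [hs, hΔ, hf, Finset.mem_filter, Finset.mem_univ, true_and]
    constructor
    · rintro ⟨h1, h2, h3, h4⟩
      exact ⟨k1.mp ⟨h1, h3⟩, k2.mp ⟨h2, h4⟩⟩
    · rintro ⟨h1, h2⟩
      obtain ⟨a1, a3⟩ := k1.mpr h1
      obtain ⟨a2, a4⟩ := k2.mpr h2
      exact ⟨a1, a2, a3, a4⟩
  have hmaps : ∀ γ ∈ s, f γ ∈ Δ ×ˢ Δ := by
    intro γ hγ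
    rw [Finset.mem_product]
    exact (hmem γ).mp hγ
  rw [Finset.card_eq_sum_card_fiberwise hmaps, Finset.sum_product]
  refine Finset.sum_congr rfl fun u hu => Finset.sum_congr rfl fun w hw => ?_
  have hfib : (s.filter fun γ => f γ = (u, w)) = Fintype.piFinset (fun i =>
      Finset.univ.filter fun x : Fin (b i) =>
        assocClass (B i) x (α i) = u i ∧ assocClass (B i) x (α' i) = w i) := by
    ext γ
    simp only [Finset.mem_filter, Fintype.mem_piFinset, Finset.mem_univ, true_and, hf,
      Prod.mk.injEq, funext_iff]
    constructor
    · rintro ⟨-, h1, h2⟩ i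
      exact ⟨h1 i, h2 i⟩
    · intro h
      refine ⟨?_, fun i => (h i).1, fun i => (h i).2⟩
      rw [hmem γ]
      have e1 : (f γ).1 = u := funext fun i => (h i).1
      have e2 : (f γ).2 = w := funext fun i => (h i).2
      rw [e1, e2]
      exact ⟨hu, hw⟩
  rw [hfib, Fintype.card_piFinset]
  exact Finset.prod_congr rfl fun i _ => by rw [hφ i (α i) (α' i) (u i) (w i), hj i]
end

section
/- Consider the key predistribution construction from t designs and assume every symbol occurs in a constant number of blocks: for each i there is r i such that every x ∈ V i lies in exactly r i blocks 𝐁 i β. Let α, α' be nodes and Γ a nonempty subset of Fin t such that for each i ∈ Γ, either α i = α' i, or 𝐁 i (α i) ∩ 𝐁 i (α' i) is a singleton. Define δ i = 1 if α i = α' i and δ i = r i otherwise. Then the number of nodes β such that, for every i ∈ Γ, β i ≠ α i in case α i = α' i, and the unique common symbol of 𝐁 i (α i) and 𝐁 i (α' i) does not belong to 𝐁 i (β i) in the other case, equals (Π_{i ∈ Γ} (b i − δ i)) · (Π_{i ∉ Γ} b i). -/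
open scoped Classical in
/-- Lemma 3 of the paper: the cardinality of the set `H(A,A';Γ)` is
`σ(Γ) = ∏_{i∈Γ}(b_i − δ_{j_i}(i)) · ∏_{i∉Γ} b_i`, where `δ i = 1` if the two nodes
have the same block of design `i` and `δ i = r i` (the replication number) otherwise. -/
theorem stmt_2 (t : ℕ) (ht : 1 ≤ t) (V : Fin t → Type*) [∀ i, DecidableEq (V i)]
    (b : Fin t → ℕ) (B : ∀ i, Fin (b i) → Finset (V i))
    (r : Fin t → ℕ)
    (hr : ∀ i (x : V i), (Finset.univ.filter fun β : Fin (b i) => x ∈ B i β).card = r i)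
    (α α' : ∀ i, Fin (b i)) (Γ : Finset (Fin t)) (hΓ : Γ.Nonempty)
    (hcase : ∀ i ∈ Γ, α i = α' i ∨ ∃ x, B i (α i) ∩ B i (α' i) = {x})
    (δ : Fin t → ℕ) (hδ : ∀ i, δ i = if α i = α' i then 1 else r i) :
    (Finset.univ.filter fun β : ∀ i, Fin (b i) => ∀ i ∈ Γ,
        if α i = α' i then β i ≠ α i
        else ∀ x, B i (α i) ∩ B i (α' i) = {x} → x ∉ B i (β i)).card
      = (∏ i ∈ Γ, (b i - δ i)) * ∏ i ∈ Γᶜ, b i := by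
  classical
  set S : ∀ i, Finset (Fin (b i)) := fun i =>
    if i ∈ Γ then
      (Finset.univ.filter fun β : Fin (b i) =>
        if α i = α' i then β ≠ α i
        else ∀ x, B i (α i) ∩ B i (α' i) = {x} → x ∉ B i β)
    else Finset.univ with hS
  have hset : (Finset.univ.filter fun β : ∀ i, Fin (b i) => ∀ i ∈ Γ,
        if α i = α' i then β i ≠ α i
        else ∀ x, B i (α i) ∩ B i (α' i) = {x} → x ∉ B i (β i))
      = Fintype.piFinset S := by
    ext β
    simp only [Finset.mem_filter, Finset.mem_univ, true_and, Fintype.mem_piFinset, hS]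
    constructor
    · intro h i
      by_cases hi : i ∈ Γ
      · simp [hi, h i hi]
      · simp [hi]
    · intro h i hi
      have := h i
      simpa [hi] using this
  rw [hset, Fintype.card_piFinset]
  rw [← Finset.prod_mul_prod_compl Γ (fun i => (S i).card)]
  congr 1
  · apply Finset.prod_congr rfl
    intro i hi
    simp only [hS, if_pos hi]
    by_cases h : α i = α' i
    · rw [hδ i, if_pos h]
      simp only [if_pos h]
      rw [Finset.filter_ne' Finset.univ (α i), Finset.card_erase_of_mem (Finset.mem_univ _)]
      simp
    · have hne := h
      obtain ⟨x, hx⟩ := (hcase i hi).resolve_left hne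
      rw [hδ i, if_neg hne]
      simp only [if_neg hne]
      have hcond : ∀ β : Fin (b i),
          (∀ y, B i (α i) ∩ B i (α' i) = {y} → y ∉ B i β) ↔ x ∉ B i β := by
        intro β
        constructor
        · intro h; exact h x hx
        · intro h y hy
          have : y = x := by
            rw [hx] at hy
            exact (Finset.singleton_injective hy.symm) ▸ rfl
          rwa [this]
      rw [Finset.filter_congr (fun β _ => hcond β)]
      have : (Finset.univ.filter fun β : Fin (b i) => x ∉ B i β)
          = Finset.univ \ (Finset.univ.filter fun β : Fin (b i) => x ∈ B i β) := by
        rw [← Finset.filter_not]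
      rw [this, Finset.card_sdiff_of_subset (Finset.filter_subset _ _), hr i x]
      simp
  · apply Finset.prod_congr rfl
    intro i hi
    simp only [hS, if_neg (Finset.mem_compl.mp hi)]
    simp
end

section
/- Consider the key predistribution construction from t designs, and assume every block has at least t symbols (|𝐁 i β| ≥ t for all i, β) and any two blocks of the same design with distinct indices share at most one symbol (|𝐁 i β ∩ 𝐁 i β'| ≤ 1 whenever β ≠ β'). Then for any two nodes α, α': Σ_{i} |𝐁 i (α i) ∩ 𝐁 i (α' i)| ≥ t if and only if either α i = α' i for at least one i, or |𝐁 i (α i) ∩ 𝐁 i (α' i)| = 1 for every i. -/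
/-- Lemma 1 in the concrete key-predistribution construction from `t` designs:
two nodes share at least `t` keys iff they agree in some coordinate or all their
pairwise block intersections are singletons. -/
theorem stmt_4 (t : ℕ) (ht : 1 ≤ t) (V : Fin t → Type*) [∀ i, DecidableEq (V i)]
    (b : Fin t → ℕ) (B : ∀ i, Fin (b i) → Finset (V i))
    (hsize : ∀ i β, t ≤ (B i β).card)
    (hint : ∀ i (β β' : Fin (b i)), β ≠ β' → (B i β ∩ B i β').card ≤ 1)
    (α α' : ∀ i, Fin (b i)) :
    t ≤ ∑ i, (B i (α i) ∩ B i (α' i)).card ↔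
      (∃ i, α i = α' i) ∨ (∀ i, (B i (α i) ∩ B i (α' i)).card = 1) := by
  constructor
  · intro h
    by_cases hex : ∃ i, α i = α' i
    · exact Or.inl hex
    · push_neg at hex
      refine Or.inr fun i => ?_
      have hle : ∀ j, (B j (α j) ∩ B j (α' j)).card ≤ 1 :=
        fun j => hint j _ _ (hex j)
      by_contra hne
      have h0 : (B i (α i) ∩ B i (α' i)).card = 0 := by
        have := hle i; omega
      have : ∑ j, (B j (α j) ∩ B j (α' j)).card < t := by
        calc ∑ j, (B j (α j) ∩ B j (α' j)).card
            < ∑ _j : Fin t, 1 := by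
              apply Finset.sum_lt_sum (fun j _ => hle j)
              exact ⟨i, Finset.mem_univ i, by omega⟩
          _ = t := by simp
      omega
  · rintro (⟨i, hi⟩ | hall)
    · calc t ≤ (B i (α i) ∩ B i (α' i)).card := by
            rw [hi, Finset.inter_self]; exact hsize i _
        _ ≤ ∑ j, (B j (α j) ∩ B j (α' j)).card :=
            Finset.single_le_sum (f := fun j => (B j (α j) ∩ B j (α' j)).card) (fun j _ => Nat.zero_le _) (Finset.mem_univ i)
    · simp [hall]
end

section
/- Consider the key predistribution construction from t designs, and assume any two blocks of the same design with distinct indices share at most one symbol, and that there are constants θ₂ i such that for every i and every block index β, exactly θ₂ i indices β' ≠ β satisfy |𝐁 i β ∩ 𝐁 i β'| = 1. Set θ₀ i := 1 and θ₁ i := b i − 1 − θ₂ i. Then for every node α and every tuple j : Fin t → {0,1,2}, the number of nodes α' such that for every i: α' i = α i if j i = 0; α' i ≠ α i and 𝐁 i (α i) ∩ 𝐁 i (α' i) = ∅ if j i = 1; and α' i ≠ α i and |𝐁 i (α i) ∩ 𝐁 i (α' i)| = 1 if j i = 2, equals Π_{i} θ_{j i} i. -/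
/-- Equation (8) of the paper: in the key-predistribution construction from `t` designs,
the number of `j₁…j_t`-th associates of any node `α` equals `∏ i, θ_{j i}(i)`, where
`θ₀ i = 1`, `θ₁ i = b i - 1 - θ₂ i`, and `θ₂ i` is the common number of blocks of design
`i` meeting a given block in exactly one symbol. -/
theorem stmt_6 (t : ℕ) (ht : 1 ≤ t) (V : Fin t → Type*) [∀ i, DecidableEq (V i)]
    (b : Fin t → ℕ) (B : ∀ i, Fin (b i) → Finset (V i))
    (hint : ∀ i (β β' : Fin (b i)), β ≠ β' → (B i β ∩ B i β').card ≤ 1)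
    (θ₂ : Fin t → ℕ)
    (hθ₂ : ∀ i (β : Fin (b i)),
      (Finset.univ.filter fun β' => β' ≠ β ∧ (B i β ∩ B i β').card = 1).card = θ₂ i)
    (α : ∀ i, Fin (b i)) (j : Fin t → Fin 3) :
    (Finset.univ.filter fun α' : ∀ i, Fin (b i) => ∀ i,
        (j i = 0 → α' i = α i) ∧
        (j i = 1 → α' i ≠ α i ∧ B i (α i) ∩ B i (α' i) = ∅) ∧
        (j i = 2 → α' i ≠ α i ∧ (B i (α i) ∩ B i (α' i)).card = 1)).card
      = ∏ i, (if j i = 0 then 1 else if j i = 1 then b i - 1 - θ₂ i else θ₂ i) := by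
  classical
  have key : (Finset.univ.filter fun α' : ∀ i, Fin (b i) => ∀ i,
        (j i = 0 → α' i = α i) ∧
        (j i = 1 → α' i ≠ α i ∧ B i (α i) ∩ B i (α' i) = ∅) ∧
        (j i = 2 → α' i ≠ α i ∧ (B i (α i) ∩ B i (α' i)).card = 1)) =
      Fintype.piFinset (fun i => Finset.univ.filter fun β' : Fin (b i) =>
        (j i = 0 → β' = α i) ∧
        (j i = 1 → β' ≠ α i ∧ B i (α i) ∩ B i β' = ∅) ∧
        (j i = 2 → β' ≠ α i ∧ (B i (α i) ∩ B i β').card = 1)) := by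
    ext α'
    simp [Fintype.mem_piFinset]
  rw [key, Fintype.card_piFinset]
  refine Finset.prod_congr rfl fun i _ => ?_
  have hb : 0 < b i := (α i).pos
  rcases h3 : j i with ⟨v, hv⟩
  interval_cases v
  · -- j i = 0
    simp only [h3, Fin.ext_iff, Fin.val_zero, Fin.val_one, Fin.val_two]
    norm_num
    rw [show (Finset.univ.filter fun β' : Fin (b i) => (β' : ℕ) = (α i : ℕ)) = {α i} by
      ext x; simp [Fin.ext_iff]]
    simp
  · -- j i = 1
    simp only [h3, Fin.ext_iff, Fin.val_zero, Fin.val_one, Fin.val_two]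
    norm_num
    have hsub : (Finset.univ.filter fun β' : Fin (b i) => β' ≠ α i ∧ B i (α i) ∩ B i β' = ∅)
        = (Finset.univ.filter fun β' : Fin (b i) => β' ≠ α i)
          \ (Finset.univ.filter fun β' : Fin (b i) => β' ≠ α i ∧ (B i (α i) ∩ B i β').card = 1) := by
      ext x
      simp only [Finset.mem_filter, Finset.mem_sdiff, Finset.mem_univ, true_and]
      constructor
      · rintro ⟨hne, he⟩
        exact ⟨hne, fun h => by simp [he] at h⟩
      · rintro ⟨hne, h⟩
        refine ⟨hne, ?_⟩
        have hle := hint i (α i) x (Ne.symm hne)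
        have h1 : (B i (α i) ∩ B i x).card ≠ 1 := fun hc => h ⟨hne, hc⟩
        have h0 : (B i (α i) ∩ B i x).card = 0 := by omega
        exact Finset.card_eq_zero.mp h0
    rw [hsub, Finset.card_sdiff_of_subset]
    · rw [hθ₂ i (α i)]
      congr 1
      rw [Finset.filter_ne', Finset.card_erase_of_mem (Finset.mem_univ _)]
      simp
    · intro x hx
      simp only [Finset.mem_filter, Finset.mem_univ, true_and] at hx ⊢
      exact hx.1
  · -- j i = 2
    simp only [h3, Fin.ext_iff, Fin.val_zero, Fin.val_one, Fin.val_two]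
    norm_num
    exact hθ₂ i (α i)
end

section
/- Let X be a type with decidable equality, let ℬ : ι → Finset X be a family of blocks such that any two blocks with distinct indices intersect in at most one element, let β : ι be a block index, and let s be a natural number with s < |ℬ β|. Then for any indices γ₁, …, γ_s, the block ℬ β is contained in the union ℬ γ₁ ∪ ⋯ ∪ ℬ γ_s if and only if γ_l = β for some l. In particular, s blocks, none equal to ℬ β in index, cannot jointly cover all the elements of ℬ β. -/
/-- Key combinatorial step in the proof of Theorem 2 (the `fail(s)` formula): if any two
blocks with distinct indices share at most one element and `s < |ℬ β|`, then `s` blocks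
`ℬ (γ 1), …, ℬ (γ s)` cover `ℬ β` iff one of them is indexed by `β` itself; in particular
`s` blocks, none indexed by `β`, cannot jointly cover `ℬ β`. -/
theorem stmt_7 {X : Type*} [DecidableEq X] {ι : Type*} (ℬ : ι → Finset X)
    (hint : ∀ γ γ' : ι, γ ≠ γ' → (ℬ γ ∩ ℬ γ').card ≤ 1)
    (β : ι) (s : ℕ) (hs : s < (ℬ β).card) (γ : Fin s → ι) :
    ((ℬ β ⊆ Finset.univ.biUnion fun l => ℬ (γ l)) ↔ ∃ l, γ l = β) ∧
    ((∀ l, γ l ≠ β) → ¬ ℬ β ⊆ Finset.univ.biUnion fun l => ℬ (γ l)) := by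
  have key : (∀ l, γ l ≠ β) → ¬ ℬ β ⊆ Finset.univ.biUnion fun l => ℬ (γ l) := by
    intro hne hsub
    have hcov : ℬ β = Finset.univ.biUnion fun l => ℬ β ∩ ℬ (γ l) := by
      apply Finset.Subset.antisymm
      · intro x hx
        obtain ⟨l, _, hl⟩ := Finset.mem_biUnion.1 (hsub hx)
        exact Finset.mem_biUnion.2 ⟨l, Finset.mem_univ l, Finset.mem_inter.2 ⟨hx, hl⟩⟩
      · intro x hx
        obtain ⟨l, _, hl⟩ := Finset.mem_biUnion.1 hx
        exact (Finset.mem_inter.1 hl).1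
    have hcard : (ℬ β).card ≤ ∑ l : Fin s, (ℬ β ∩ ℬ (γ l)).card := by
      calc (ℬ β).card = (Finset.univ.biUnion fun l => ℬ β ∩ ℬ (γ l)).card := by rw [← hcov]
        _ ≤ ∑ l : Fin s, (ℬ β ∩ ℬ (γ l)).card := Finset.card_biUnion_le
    have hle : ∑ l : Fin s, (ℬ β ∩ ℬ (γ l)).card ≤ s := by
      calc ∑ l : Fin s, (ℬ β ∩ ℬ (γ l)).card ≤ ∑ _l : Fin s, 1 :=
            Finset.sum_le_sum fun l _ => hint β (γ l) (fun h => hne l h.symm)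
        _ = s := by simp
    omega
  refine ⟨⟨fun hsub => ?_, fun ⟨l, hl⟩ x hx => Finset.mem_biUnion.2 ⟨l, Finset.mem_univ l, hl ▸ hx⟩⟩, key⟩
  by_contra h
  push_neg at h
  exact key (fun l hl => h l hl) hsub
end

section
/- Let m ≥ 4 and consider the triangular association scheme on the 2-element subsets of Fin m (1st associates: distinct intersecting pairs; 2nd associates: disjoint pairs). Let A and B be 2nd associates (A ∩ B = ∅). Then: the number of 2-element subsets C ∉ {A, B} meeting both A and B is 4; the number of 2-element subsets C meeting A and disjoint from B is 2m − 8; and the number of 2-element subsets C disjoint from both A and B is (m − 4 choose 2). -/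
lemma pair_eq_aux {α : Type*} [DecidableEq α] {C : Finset α} (h : C.card = 2) {a b : α}
    (ha : a ∈ C) (hb : b ∈ C) (hab : a ≠ b) : C = {a, b} := by
  refine (Finset.eq_of_subset_of_card_le ?_ ?_).symm
  · intro x hx
    simp only [Finset.mem_insert, Finset.mem_singleton] at hx
    rcases hx with rfl | rfl <;> assumption
  · rw [h, Finset.card_pair hab]

/-- Triangular association scheme on the 2-element subsets of `Fin m`: for `A, B` second
associates (`A ∩ B = ∅`), we have `φ²₁,₁ = 4`, `φ²₁,₂ = 2m - 8`,
`φ²₂,₂ = (m - 4).choose 2`. -/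
theorem stmt_13 (m : ℕ) (hm : 4 ≤ m) (A B : Finset (Fin m))
    (hA : A.card = 2) (hB : B.card = 2) (hdisj : A ∩ B = ∅) :
    (Finset.univ.filter fun C : Finset (Fin m) =>
        C.card = 2 ∧ C ≠ A ∧ C ≠ B ∧ (A ∩ C).Nonempty ∧ (B ∩ C).Nonempty).card = 4 ∧
    (Finset.univ.filter fun C : Finset (Fin m) =>
        C.card = 2 ∧ C ≠ A ∧ (A ∩ C).Nonempty ∧ B ∩ C = ∅).card = 2 * m - 8 ∧
    (Finset.univ.filter fun C : Finset (Fin m) =>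
        C.card = 2 ∧ A ∩ C = ∅ ∧ B ∩ C = ∅).card = (m - 4).choose 2 := by
  have hdAB : Disjoint A B := Finset.disjoint_iff_inter_eq_empty.mpr hdisj
  have hAB : (A ∪ B).card = 4 := by
    rw [Finset.card_union_of_disjoint hdAB, hA, hB]
  have hScard : (A ∪ B)ᶜ.card = m - 4 := by
    rw [Finset.card_compl, hAB, Fintype.card_fin]
  have hnAB : ∀ b ∈ B, b ∉ A := fun b hb ha => (Finset.disjoint_left.mp hdAB) ha hb
  refine ⟨?_, ?_, ?_⟩
  · -- count = 4 via bijection with A ×ˢ B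
    have := Finset.card_bij (s := A ×ˢ B)
      (t := Finset.univ.filter fun C : Finset (Fin m) =>
        C.card = 2 ∧ C ≠ A ∧ C ≠ B ∧ (A ∩ C).Nonempty ∧ (B ∩ C).Nonempty)
      (fun p _ => ({p.1, p.2} : Finset (Fin m)))
      (by
        rintro ⟨a, b⟩ hp
        rw [Finset.mem_product] at hp
        obtain ⟨ha, hb⟩ := hp
        have hab : a ≠ b := fun h => hnAB b hb (h ▸ ha)
        simp only [Finset.mem_filter, Finset.mem_univ, true_and]
        refine ⟨Finset.card_pair hab, ?_, ?_, ⟨a, ?_⟩, ⟨b, ?_⟩⟩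
        · intro h
          exact hnAB b hb (h ▸ (by simp : b ∈ ({a, b} : Finset (Fin m))))
        · intro h
          have : a ∈ B := h ▸ (by simp : a ∈ ({a, b} : Finset (Fin m)))
          exact Finset.disjoint_left.mp hdAB ha this
        · simp [ha]
        · simp [hb])
      (by
        rintro ⟨a, b⟩ hp ⟨a', b'⟩ hp' h
        rw [Finset.mem_product] at hp hp'
        obtain ⟨ha, hb⟩ := hp; obtain ⟨ha', hb'⟩ := hp'
        have h' : ({a, b} : Finset (Fin m)) = {a', b'} := h
        have h1 : a' ∈ ({a, b} : Finset (Fin m)) := h' ▸ (by simp)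
        have h2 : b' ∈ ({a, b} : Finset (Fin m)) := h' ▸ (by simp)
        simp only [Finset.mem_insert, Finset.mem_singleton] at h1 h2
        have e1 : a' = a := by
          rcases h1 with rfl | rfl
          · rfl
          · exact absurd ha' (hnAB a' hb)
        have e2 : b' = b := by
          rcases h2 with rfl | rfl
          · exact absurd ha (hnAB b' hb')
          · rfl
        simp [e1, e2])
      (by
        intro C hC
        simp only [Finset.mem_filter, Finset.mem_univ, true_and] at hC
        obtain ⟨hc2, _, _, ⟨a, haC⟩, ⟨b, hbC⟩⟩ := hC
        rw [Finset.mem_inter] at haC hbC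
        have hab : a ≠ b := fun h => hnAB b hbC.1 (h ▸ haC.1)
        exact ⟨⟨a, b⟩, Finset.mem_product.mpr ⟨haC.1, hbC.1⟩,
          (pair_eq_aux hc2 haC.2 hbC.2 hab).symm⟩)
    rw [← this, Finset.card_product, hA, hB]
  · -- count = 2m - 8 via bijection with A ×ˢ (A ∪ B)ᶜ
    have := Finset.card_bij (s := A ×ˢ (A ∪ B)ᶜ)
      (t := Finset.univ.filter fun C : Finset (Fin m) =>
        C.card = 2 ∧ C ≠ A ∧ (A ∩ C).Nonempty ∧ B ∩ C = ∅)
      (fun p _ => ({p.1, p.2} : Finset (Fin m)))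
      (by
        rintro ⟨a, x⟩ hp
        rw [Finset.mem_product] at hp
        obtain ⟨ha, hx⟩ := hp
        rw [Finset.mem_compl, Finset.mem_union] at hx
        push_neg at hx
        have hax : a ≠ x := fun h => hx.1 (h ▸ ha)
        simp only [Finset.mem_filter, Finset.mem_univ, true_and]
        refine ⟨Finset.card_pair hax, ?_, ⟨a, by simp [ha]⟩, ?_⟩
        · intro h
          exact hx.1 (h ▸ (by simp : x ∈ ({a, x} : Finset (Fin m))))
        · rw [Finset.eq_empty_iff_forall_notMem]
          intro y hy
          rw [Finset.mem_inter] at hy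
          simp only [Finset.mem_insert, Finset.mem_singleton] at hy
          rcases hy.2 with rfl | rfl
          · exact hnAB y hy.1 ha
          · exact hx.2 hy.1)
      (by
        rintro ⟨a, x⟩ hp ⟨a', x'⟩ hp' h
        rw [Finset.mem_product] at hp hp'
        obtain ⟨ha, hx⟩ := hp; obtain ⟨ha', hx'⟩ := hp'
        rw [Finset.mem_compl, Finset.mem_union] at hx hx'
        push_neg at hx hx'
        have h' : ({a, x} : Finset (Fin m)) = {a', x'} := h
        have h1 : a' ∈ ({a, x} : Finset (Fin m)) := h' ▸ (by simp)
        have h2 : x' ∈ ({a, x} : Finset (Fin m)) := h' ▸ (by simp)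
        simp only [Finset.mem_insert, Finset.mem_singleton] at h1 h2
        have e1 : a' = a := by
          rcases h1 with rfl | rfl
          · rfl
          · exact absurd ha' hx.1
        have e2 : x' = x := by
          rcases h2 with rfl | rfl
          · exact absurd ha hx'.1
          · rfl
        simp [e1, e2])
      (by
        intro C hC
        simp only [Finset.mem_filter, Finset.mem_univ, true_and] at hC
        obtain ⟨hc2, hCA, ⟨a, haC⟩, hBC⟩ := hC
        rw [Finset.mem_inter] at haC
        obtain ⟨x, hxC, hxa⟩ : ∃ x ∈ C, x ≠ a := by
          by_contra hcon
          push_neg at hcon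
          have : C ⊆ {a} := fun y hy => Finset.mem_singleton.mpr (hcon y hy)
          have := Finset.card_le_card this
          simp [hc2] at this
        have hxA : x ∉ A := by
          intro hxA
          exact hCA (Finset.eq_of_subset_of_card_le
            (by
              intro y hy
              have := pair_eq_aux hc2 haC.2 hxC (Ne.symm hxa)
              rw [this] at hy
              simp only [Finset.mem_insert, Finset.mem_singleton] at hy
              rcases hy with rfl | rfl
              · exact haC.1
              · exact hxA)
            (by rw [hA, hc2]))
        have hxB : x ∉ B := by
          intro hxB
          exact absurd (Finset.mem_inter.mpr ⟨hxB, hxC⟩) (by simp [hBC])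
        refine ⟨⟨a, x⟩, Finset.mem_product.mpr ⟨haC.1, ?_⟩,
          (pair_eq_aux hc2 haC.2 hxC (Ne.symm hxa)).symm⟩
        rw [Finset.mem_compl, Finset.mem_union]
        push_neg
        exact ⟨hxA, hxB⟩)
    rw [← this, Finset.card_product, hA, hScard]
    omega
  · -- count = (m-4).choose 2
    have heq : (Finset.univ.filter fun C : Finset (Fin m) =>
        C.card = 2 ∧ A ∩ C = ∅ ∧ B ∩ C = ∅) = Finset.powersetCard 2 (A ∪ B)ᶜ := by
      ext C
      simp only [Finset.mem_filter, Finset.mem_univ, true_and, Finset.mem_powersetCard]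
      constructor
      · rintro ⟨hc2, hAC, hBC⟩
        refine ⟨fun x hx => ?_, hc2⟩
        rw [Finset.mem_compl, Finset.mem_union]
        push_neg
        constructor
        · intro hxA
          exact absurd (Finset.mem_inter.mpr ⟨hxA, hx⟩) (by simp [hAC])
        · intro hxB
          exact absurd (Finset.mem_inter.mpr ⟨hxB, hx⟩) (by simp [hBC])
      · rintro ⟨hsub, hc2⟩
        refine ⟨hc2, ?_, ?_⟩ <;>
        · rw [Finset.eq_empty_iff_forall_notMem]
          intro y hy
          rw [Finset.mem_inter] at hy
          have := hsub hy.2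
          rw [Finset.mem_compl, Finset.mem_union] at this
          push_neg at this
          exact absurd hy.1 (by tauto)
    rw [heq, Finset.card_powersetCard, hScard]
end

section
/- Let h ≥ 1 be an integer and let X = ZMod (2h+1) × ZMod 3. Define a family 𝓑 of subsets of X consisting of: (i) for each x ∈ ZMod 3, each integer y with 1 ≤ y ≤ h (regarded in ZMod (2h+1)), and each z ∈ ZMod (2h+1), the set {(z + y, x), (z − y, x), (z, x + 1)}; and (ii) for each z ∈ ZMod (2h+1), the set {(z, 0), (z, 1), (z, 2)}. Then every member of 𝓑 has exactly 3 elements, and for any two distinct points of X there is exactly one member of 𝓑 containing both of them. -/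
lemma stmt16_z3a : ∀ x : ZMod 3, x ≠ x + 1 := by decide
lemma stmt16_z3b : ∀ x : ZMod 3, x ≠ x + 1 + 1 := by decide
lemma stmt16_z3c : ∀ x y : ZMod 3, x ≠ y → y = x + 1 ∨ x = y + 1 := by decide

lemma stmt16_cast_ne (h : ℕ) {y : ℕ} (h1 : 1 ≤ y) (h2 : y ≤ h) : (y : ZMod (2*h+1)) ≠ 0 := by
  haveI : NeZero (2*h+1) := ⟨by omega⟩
  intro he
  rw [ZMod.natCast_eq_zero_iff] at he
  have := Nat.le_of_dvd (by omega) he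
  omega

lemma stmt16_cast_inj (h : ℕ) {y y' : ℕ} (h2 : y ≤ h) (h2' : y' ≤ h)
    (he : (y : ZMod (2*h+1)) = (y' : ZMod (2*h+1))) : y = y' := by
  haveI : NeZero (2*h+1) := ⟨by omega⟩
  have := congrArg ZMod.val he
  rwa [ZMod.val_natCast_of_lt (by omega), ZMod.val_natCast_of_lt (by omega)] at this

lemma stmt16_cast_add_ne (h : ℕ) {y y' : ℕ} (h1 : 1 ≤ y) (h2 : y ≤ h) (h1' : 1 ≤ y') (h2' : y' ≤ h) :
    (y : ZMod (2*h+1)) ≠ -(y' : ZMod (2*h+1)) := by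
  haveI : NeZero (2*h+1) := ⟨by omega⟩
  intro he
  have h0 : ((y + y' : ℕ) : ZMod (2*h+1)) = 0 := by push_cast; rw [he]; ring
  rw [ZMod.natCast_eq_zero_iff] at h0
  have := Nat.le_of_dvd (by omega) h0
  omega

lemma stmt16_exists_rep (h : ℕ) {d : ZMod (2*h+1)} (hd : d ≠ 0) :
    ∃ y : ℕ, 1 ≤ y ∧ y ≤ h ∧ (d = (y : ZMod (2*h+1)) ∨ d = -(y : ZMod (2*h+1))) := by
  haveI : NeZero (2*h+1) := ⟨by omega⟩
  have hv : d.val < 2*h+1 := ZMod.val_lt d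
  have hv0 : d.val ≠ 0 := by
    intro h0; exact hd ((ZMod.val_eq_zero d).mp h0)
  have hcast : ((d.val : ℕ) : ZMod (2*h+1)) = d := ZMod.natCast_rightInverse d
  by_cases hle : d.val ≤ h
  · exact ⟨d.val, by omega, hle, Or.inl hcast.symm⟩
  · refine ⟨2*h+1 - d.val, by omega, by omega, Or.inr ?_⟩
    have hz : ((d.val : ℕ) : ZMod (2*h+1)) + ((2*h+1 - d.val : ℕ) : ZMod (2*h+1)) = 0 := by
      rw [← Nat.cast_add]
      have he : d.val + (2*h+1 - d.val) = 2*h+1 := by omega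
      rw [he, ZMod.natCast_self]
    rw [hcast] at hz
    exact eq_neg_of_add_eq_zero_left hz

lemma stmt16_key_lemma (h : ℕ) : ((h+1 : ℕ) : ZMod (2*h+1)) * 2 = 1 := by
  have h0 : ((2*h+1 : ℕ) : ZMod (2*h+1)) = 0 := ZMod.natCast_self _
  push_cast at h0 ⊢
  linear_combination h0

lemma stmt16_two_mul_cancel (h : ℕ) {a b : ZMod (2*h+1)} (he : 2*a = 2*b) : a = b := by
  have key := stmt16_key_lemma h
  linear_combination ((h+1 : ℕ) : ZMod (2*h+1)) * he - (a - b) * key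


def stmt16_Blocks (h : ℕ) : Set (Finset (ZMod (2 * h + 1) × ZMod 3)) :=
  {B | (∃ (x : ZMod 3) (y : ℕ), 1 ≤ y ∧ y ≤ h ∧ ∃ z : ZMod (2 * h + 1),
      B = {(z + (y : ZMod (2 * h + 1)), x), (z - (y : ZMod (2 * h + 1)), x), (z, x + 1)}) ∨
    ∃ z : ZMod (2 * h + 1), B = {(z, 0), (z, 1), (z, 2)}}

lemma stmt16_same_level (h : ℕ) (a b : ZMod (2*h+1)) (x : ZMod 3) (hab : a ≠ b) :
    ∃! B : Finset (ZMod (2*h+1) × ZMod 3),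
      B ∈ stmt16_Blocks h ∧ (a, x) ∈ B ∧ (b, x) ∈ B := by
  haveI : NeZero (2*h+1) := ⟨by omega⟩
  set c : ZMod (2*h+1) := ((h+1 : ℕ) : ZMod (2*h+1)) * (a - b) with hc
  have key := stmt16_key_lemma h
  have h2c : c + c = a - b := by rw [hc]; linear_combination (a - b) * key
  have hc0 : c ≠ 0 := by
    intro h0
    exact hab (by linear_combination 2*h0 - h2c)
  obtain ⟨y, hy1, hy2, hy⟩ := stmt16_exists_rep h hc0
  refine ⟨{(b + c + (y : ZMod (2*h+1)), x), (b + c - (y : ZMod (2*h+1)), x), (b + c, x + 1)},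
    ⟨Or.inl ⟨x, y, hy1, hy2, b + c, rfl⟩, ?_, ?_⟩, ?_⟩
  · simp only [Finset.mem_insert, Finset.mem_singleton, Prod.mk.injEq]
    rcases hy with hcy | hcy
    · exact Or.inl ⟨by linear_combination hcy - h2c, trivial⟩
    · exact Or.inr (Or.inl ⟨by linear_combination hcy - h2c, trivial⟩)
  · simp only [Finset.mem_insert, Finset.mem_singleton, Prod.mk.injEq]
    rcases hy with hcy | hcy
    · exact Or.inr (Or.inl ⟨by linear_combination -hcy, trivial⟩)
    · exact Or.inl ⟨by linear_combination -hcy, trivial⟩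
  · rintro B' ⟨hB', hp, hq⟩
    rcases hB' with ⟨X, y', hy'1, hy'2, z', rfl⟩ | ⟨z', rfl⟩
    · simp only [Finset.mem_insert, Finset.mem_singleton, Prod.mk.injEq] at hp hq
      rcases hp with ⟨ha, hx⟩ | ⟨ha, hx⟩ | ⟨ha, hx⟩ <;>
        rcases hq with ⟨hb, hx'⟩ | ⟨hb, hx'⟩ | ⟨hb, hx'⟩
      · exact absurd (ha.trans hb.symm) hab
      · -- a = z'+y', b = z'-y'
        subst hx
        have hzz : z' = b + c := stmt16_two_mul_cancel h (by linear_combination -ha - hb - h2c)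
        have hyc : (y' : ZMod (2*h+1)) = c :=
          stmt16_two_mul_cancel h (by linear_combination hb - ha - h2c)
        rcases hy with hcy | hcy
        · have hyy : y' = y := stmt16_cast_inj h hy'2 hy2 (hyc.trans hcy)
          subst hyy
          rw [hzz]
        · exact absurd (hyc.trans hcy) (stmt16_cast_add_ne h hy'1 hy'2 hy1 hy2)
      · exact absurd (hx.symm.trans hx') (stmt16_z3a X)
      · -- a = z'-y', b = z'+y'
        subst hx
        have hzz : z' = b + c := stmt16_two_mul_cancel h (by linear_combination -ha - hb - h2c)
        have hyc : (y' : ZMod (2*h+1)) = -c :=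
          stmt16_two_mul_cancel h (by linear_combination ha - hb + h2c)
        rcases hy with hcy | hcy
        · refine absurd (show (y' : ZMod (2*h+1)) = -(y : ZMod (2*h+1)) by
            rw [hyc, hcy]) (stmt16_cast_add_ne h hy'1 hy'2 hy1 hy2)
        · have hyy : y' = y := stmt16_cast_inj h hy'2 hy2 (by rw [hyc, hcy]; ring)
          subst hyy
          rw [hzz]
      · exact absurd (ha.trans hb.symm) hab
      · exact absurd (hx.symm.trans hx') (stmt16_z3a X)
      · exact absurd (hx'.symm.trans hx) (stmt16_z3a X)
      · exact absurd (hx'.symm.trans hx) (stmt16_z3a X)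
      · exact absurd (ha.trans hb.symm) hab
    · simp only [Finset.mem_insert, Finset.mem_singleton, Prod.mk.injEq] at hp hq
      rcases hp with ⟨h1, _⟩ | ⟨h1, _⟩ | ⟨h1, _⟩ <;>
        rcases hq with ⟨h2, _⟩ | ⟨h2, _⟩ | ⟨h2, _⟩ <;>
        exact absurd (h1.trans h2.symm) hab

lemma stmt16_cross (h : ℕ) (a b : ZMod (2*h+1)) (x : ZMod 3) :
    ∃! B : Finset (ZMod (2*h+1) × ZMod 3),
      B ∈ stmt16_Blocks h ∧ (a, x) ∈ B ∧ (b, x + 1) ∈ B := by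
  haveI : NeZero (2*h+1) := ⟨by omega⟩
  by_cases hab : a = b
  · subst hab
    refine ⟨{(a, 0), (a, 1), (a, 2)}, ⟨Or.inr ⟨a, rfl⟩, ?_, ?_⟩, ?_⟩
    · simp only [Finset.mem_insert, Finset.mem_singleton, Prod.mk.injEq]
      rcases (by decide : ∀ u : ZMod 3, u = 0 ∨ u = 1 ∨ u = 2) x with h0 | h0 | h0 <;>
        simp [h0]
    · simp only [Finset.mem_insert, Finset.mem_singleton, Prod.mk.injEq]
      rcases (by decide : ∀ u : ZMod 3, u = 0 ∨ u = 1 ∨ u = 2) (x + 1) with h0 | h0 | h0 <;>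
        simp [h0]
    · rintro B' ⟨hB', hp, hq⟩
      rcases hB' with ⟨X, y', hy'1, hy'2, z', rfl⟩ | ⟨z', rfl⟩
      · simp only [Finset.mem_insert, Finset.mem_singleton, Prod.mk.injEq] at hp hq
        rcases hp with ⟨ha, hx⟩ | ⟨ha, hx⟩ | ⟨ha, hx⟩ <;>
          rcases hq with ⟨hb, hx'⟩ | ⟨hb, hx'⟩ | ⟨hb, hx'⟩
        · exact absurd (hx.trans hx'.symm) (stmt16_z3a x)
        · exact absurd (hx.trans hx'.symm) (stmt16_z3a x)
        · exact absurd (show (y' : ZMod (2*h+1)) = 0 by linear_combination hb - ha)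
            (stmt16_cast_ne h hy'1 hy'2)
        · exact absurd (hx.trans hx'.symm) (stmt16_z3a x)
        · exact absurd (hx.trans hx'.symm) (stmt16_z3a x)
        · exact absurd (show (y' : ZMod (2*h+1)) = 0 by linear_combination ha - hb)
            (stmt16_cast_ne h hy'1 hy'2)
        · rw [← hx'] at hx; exact absurd hx (stmt16_z3b x)
        · rw [← hx'] at hx; exact absurd hx (stmt16_z3b x)
        · exact absurd (hx.trans hx'.symm) (stmt16_z3a x)
      · simp only [Finset.mem_insert, Finset.mem_singleton, Prod.mk.injEq] at hp
        rcases hp with ⟨h1, _⟩ | ⟨h1, _⟩ | ⟨h1, _⟩ <;> rw [← h1]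
  · have hd0 : a - b ≠ 0 := sub_ne_zero.mpr hab
    obtain ⟨y, hy1, hy2, hy⟩ := stmt16_exists_rep h hd0
    refine ⟨{(b + (y : ZMod (2*h+1)), x), (b - (y : ZMod (2*h+1)), x), (b, x + 1)},
      ⟨Or.inl ⟨x, y, hy1, hy2, b, rfl⟩, ?_, ?_⟩, ?_⟩
    · simp only [Finset.mem_insert, Finset.mem_singleton, Prod.mk.injEq]
      rcases hy with hcy | hcy
      · exact Or.inl ⟨by linear_combination hcy, trivial⟩
      · exact Or.inr (Or.inl ⟨by linear_combination hcy, trivial⟩)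
    · simp only [Finset.mem_insert, Finset.mem_singleton, Prod.mk.injEq]
      exact Or.inr (Or.inr trivial)
    · rintro B' ⟨hB', hp, hq⟩
      rcases hB' with ⟨X, y', hy'1, hy'2, z', rfl⟩ | ⟨z', rfl⟩
      · simp only [Finset.mem_insert, Finset.mem_singleton, Prod.mk.injEq] at hp hq
        rcases hp with ⟨ha, hx⟩ | ⟨ha, hx⟩ | ⟨ha, hx⟩ <;>
          rcases hq with ⟨hb, hx'⟩ | ⟨hb, hx'⟩ | ⟨hb, hx'⟩
        · exact absurd (hx.trans hx'.symm) (stmt16_z3a x)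
        · exact absurd (hx.trans hx'.symm) (stmt16_z3a x)
        · -- a = z'+y', b = z', x = X, x+1 = X+1
          have hX : x = X := hx
          subst hX
          rcases hy with hcy | hcy
          · have hyy : y' = y := stmt16_cast_inj h hy'2 hy2
              (by linear_combination hcy - ha + hb)
            subst hyy
            rw [← hb]
          · exact absurd (show (y' : ZMod (2*h+1)) = -(y : ZMod (2*h+1)) by
              linear_combination hb - ha + hcy) (stmt16_cast_add_ne h hy'1 hy'2 hy1 hy2)
        · exact absurd (hx.trans hx'.symm) (stmt16_z3a x)
        · exact absurd (hx.trans hx'.symm) (stmt16_z3a x)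
        · -- a = z'-y', b = z', x = X
          have hX : x = X := hx
          subst hX
          rcases hy with hcy | hcy
          · exact absurd (show (y : ZMod (2*h+1)) = -(y' : ZMod (2*h+1)) by
              linear_combination ha - hb - hcy) (stmt16_cast_add_ne h hy1 hy2 hy'1 hy'2)
          · have hyy : y' = y := stmt16_cast_inj h hy'2 hy2
              (by linear_combination ha - hb - hcy)
            subst hyy
            rw [← hb]
        · rw [← hx'] at hx; exact absurd hx (stmt16_z3b x)
        · rw [← hx'] at hx; exact absurd hx (stmt16_z3b x)
        · exact absurd (ha.trans hb.symm) hab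
      · simp only [Finset.mem_insert, Finset.mem_singleton, Prod.mk.injEq] at hp hq
        rcases hp with ⟨h1, _⟩ | ⟨h1, _⟩ | ⟨h1, _⟩ <;>
          rcases hq with ⟨h2, _⟩ | ⟨h2, _⟩ | ⟨h2, _⟩ <;>
          exact absurd (h1.trans h2.symm) hab

/-- The cyclic Steiner triple system on `6h + 3` points used in Section 7 of the paper:
on `X = ZMod (2h+1) × ZMod 3`, the blocks `{(z+y, x), (z-y, x), (z, x+1)}` for
`x ∈ ZMod 3`, `1 ≤ y ≤ h`, `z ∈ ZMod (2h+1)`, together with `{(z,0), (z,1), (z,2)}`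
for each `z`, all have 3 elements, and any two distinct points lie in exactly one block. -/
theorem stmt_16 (h : ℕ) (hh : 1 ≤ h) :
    (∀ B ∈ ({B : Finset (ZMod (2 * h + 1) × ZMod 3) |
        (∃ (x : ZMod 3) (y : ℕ), 1 ≤ y ∧ y ≤ h ∧ ∃ z : ZMod (2 * h + 1),
          B = {(z + (y : ZMod (2 * h + 1)), x), (z - (y : ZMod (2 * h + 1)), x),
               (z, x + 1)}) ∨
        ∃ z : ZMod (2 * h + 1), B = {(z, 0), (z, 1), (z, 2)}} :
        Set (Finset (ZMod (2 * h + 1) × ZMod 3))), B.card = 3) ∧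
    ∀ p q : ZMod (2 * h + 1) × ZMod 3, p ≠ q →
      ∃! B : Finset (ZMod (2 * h + 1) × ZMod 3),
        B ∈ ({B : Finset (ZMod (2 * h + 1) × ZMod 3) |
          (∃ (x : ZMod 3) (y : ℕ), 1 ≤ y ∧ y ≤ h ∧ ∃ z : ZMod (2 * h + 1),
            B = {(z + (y : ZMod (2 * h + 1)), x), (z - (y : ZMod (2 * h + 1)), x),
                 (z, x + 1)}) ∨
          ∃ z : ZMod (2 * h + 1), B = {(z, 0), (z, 1), (z, 2)}} :
          Set (Finset (ZMod (2 * h + 1) × ZMod 3))) ∧ p ∈ B ∧ q ∈ B := by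
  constructor
  · rintro B (⟨x, y, hy1, hy2, z, rfl⟩ | ⟨z, rfl⟩)
    · rw [Finset.card_eq_three]
      refine ⟨_, _, _, ?_, ?_, ?_, rfl⟩
      · intro he
        have h1 : z + (y : ZMod (2*h+1)) = z - (y : ZMod (2*h+1)) := congrArg Prod.fst he
        exact stmt16_cast_add_ne h hy1 hy2 hy1 hy2 (by linear_combination h1)
      · intro he
        exact stmt16_z3a x (congrArg Prod.snd he)
      · intro he
        exact stmt16_z3a x (congrArg Prod.snd he)
    · rw [Finset.card_eq_three]
      refine ⟨_, _, _, ?_, ?_, ?_, rfl⟩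
      · exact fun he => absurd (congrArg Prod.snd he) (show (0:ZMod 3) ≠ 1 by decide)
      · exact fun he => absurd (congrArg Prod.snd he) (show (0:ZMod 3) ≠ 2 by decide)
      · exact fun he => absurd (congrArg Prod.snd he) (show (1:ZMod 3) ≠ 2 by decide)
  · rintro ⟨a, u⟩ ⟨b, w⟩ hpq
    by_cases huw : u = w
    · subst huw
      have hab : a ≠ b := fun hab => hpq (by rw [hab])
      exact stmt16_same_level h a b u hab
    · rcases stmt16_z3c u w huw with hw | hu
      · subst hw
        exact stmt16_cross h a b u
      · subst hu
        obtain ⟨B, ⟨hB, h1, h2⟩, hun⟩ := stmt16_cross h b a w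
        exact ⟨B, ⟨hB, h2, h1⟩, fun B' hB' => hun B' ⟨hB'.1, hB'.2.2, hB'.2.1⟩⟩
end

section
/- Let p ≥ 3 and c ≥ 0 with c ≤ p − 1, and let L : Fin c → Fin p → Fin p → Fin p be a family of mutually orthogonal Latin squares: for each s, every row map L s i · and every column map L s · j is bijective, and for s ≠ s' the map (i, j) ↦ (L s i j, L s' i j) is injective. Call two distinct cells (i, j), (i', j') of Fin p × Fin p 2nd associates if i = i', or j = j', or L s i j = L s i' j' for some s, and 1st associates otherwise. Then every cell has exactly (c + 2)(p − 1) second associates and exactly (p − 1)(p − 1 − c) first associates. -/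
/-- Latin square type association scheme built from `c` mutually orthogonal Latin squares
of order `p`: every cell has exactly `(c + 2)(p - 1)` second associates (same row, same
column, or same letter in some square) and `(p - 1)(p - 1 - c)` first associates. -/
theorem stmt_17 (p c : ℕ) (hp : 3 ≤ p) (hc : c ≤ p - 1)
    (L : Fin c → Fin p → Fin p → Fin p)
    (hrow : ∀ s i, Function.Bijective (L s i))
    (hcol : ∀ s j, Function.Bijective fun i => L s i j)
    (horth : ∀ s s', s ≠ s' →
      Function.Injective fun ij : Fin p × Fin p => (L s ij.1 ij.2, L s' ij.1 ij.2))
    (x : Fin p × Fin p) :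
    (Finset.univ.filter fun y : Fin p × Fin p =>
        y ≠ x ∧ (y.1 = x.1 ∨ y.2 = x.2 ∨ ∃ s, L s y.1 y.2 = L s x.1 x.2)).card
      = (c + 2) * (p - 1) ∧
    (Finset.univ.filter fun y : Fin p × Fin p =>
        y ≠ x ∧ ¬(y.1 = x.1 ∨ y.2 = x.2 ∨ ∃ s, L s y.1 y.2 = L s x.1 x.2)).card
      = (p - 1) * (p - 1 - c) := by
  classical
  set R : Finset (Fin p × Fin p) :=
    Finset.univ.filter (fun y => y ≠ x ∧ y.1 = x.1) with hR
  set C : Finset (Fin p × Fin p) :=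
    Finset.univ.filter (fun y => y ≠ x ∧ y.2 = x.2) with hC
  set Ls : Fin c → Finset (Fin p × Fin p) :=
    fun s => Finset.univ.filter (fun y => y ≠ x ∧ L s y.1 y.2 = L s x.1 x.2) with hLs
  have memR : ∀ y, y ∈ R ↔ y ≠ x ∧ y.1 = x.1 := by
    intro y; simp [hR]
  have memC : ∀ y, y ∈ C ↔ y ≠ x ∧ y.2 = x.2 := by
    intro y; simp [hC]
  have memLs : ∀ s y, y ∈ Ls s ↔ y ≠ x ∧ L s y.1 y.2 = L s x.1 x.2 := by
    intro s y; simp [hLs]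
  -- cardinalities
  have cardR : R.card = p - 1 := by
    have him : R = (Finset.univ.erase x.2).image (fun j => (x.1, j)) := by
      ext y
      simp only [memR, Finset.mem_image, Finset.mem_erase, Finset.mem_univ, and_true]
      constructor
      · rintro ⟨hne, h1⟩
        refine ⟨y.2, fun h2 => hne (Prod.ext h1 h2), (Prod.ext h1.symm rfl)⟩
      · rintro ⟨j, hj, rfl⟩
        exact ⟨fun h => hj (congrArg Prod.snd h), rfl⟩
    rw [him, Finset.card_image_of_injective _ (fun a b h => congrArg Prod.snd h),
      Finset.card_erase_of_mem (Finset.mem_univ _), Finset.card_univ, Fintype.card_fin]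
  have cardC : C.card = p - 1 := by
    have him : C = (Finset.univ.erase x.1).image (fun i => (i, x.2)) := by
      ext y
      simp only [memC, Finset.mem_image, Finset.mem_erase, Finset.mem_univ, and_true]
      constructor
      · rintro ⟨hne, h2⟩
        refine ⟨y.1, fun h1 => hne (Prod.ext h1 h2), (Prod.ext rfl h2.symm)⟩
      · rintro ⟨i, hi, rfl⟩
        exact ⟨fun h => hi (congrArg Prod.fst h), rfl⟩
    rw [him, Finset.card_image_of_injective _ (fun a b h => congrArg Prod.fst h),
      Finset.card_erase_of_mem (Finset.mem_univ _), Finset.card_univ, Fintype.card_fin]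
  have cardLs : ∀ s, (Ls s).card = p - 1 := by
    intro s
    have him : Ls s = (Finset.univ.erase x.1).image
        (fun i => (i, (Equiv.ofBijective _ (hrow s i)).symm (L s x.1 x.2))) := by
      ext y
      simp only [memLs, Finset.mem_image, Finset.mem_erase, Finset.mem_univ, and_true]
      constructor
      · rintro ⟨hne, heq⟩
        have h1 : y.1 ≠ x.1 := by
          intro h1
          apply hne
          have h2 := heq
          rw [h1] at h2
          exact Prod.ext h1 ((hrow s x.1).1 h2)
        refine ⟨y.1, h1, Prod.ext rfl ?_⟩
        have : (Equiv.ofBijective _ (hrow s y.1)) y.2 = L s x.1 x.2 := heq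
        rw [← this, Equiv.symm_apply_apply]
      · rintro ⟨i, hi, rfl⟩
        constructor
        · intro h; exact hi (congrArg Prod.fst h)
        · exact (Equiv.ofBijective _ (hrow s i)).apply_symm_apply _
    rw [him, Finset.card_image_of_injective _ (fun a b h => congrArg Prod.fst h),
      Finset.card_erase_of_mem (Finset.mem_univ _), Finset.card_univ, Fintype.card_fin]
  -- disjointness
  have dRC : Disjoint R C := by
    rw [Finset.disjoint_left]
    intro y hy hy'
    rw [memR] at hy; rw [memC] at hy'
    exact hy.1 (Prod.ext hy.2 hy'.2)
  have dRLs : ∀ s, Disjoint R (Ls s) := by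
    intro s
    rw [Finset.disjoint_left]
    intro y hy hy'
    rw [memR] at hy; rw [memLs] at hy'
    apply hy.1
    have h2 := hy'.2
    rw [hy.2] at h2
    exact Prod.ext hy.2 ((hrow s x.1).1 h2)
  have dCLs : ∀ s, Disjoint C (Ls s) := by
    intro s
    rw [Finset.disjoint_left]
    intro y hy hy'
    rw [memC] at hy; rw [memLs] at hy'
    apply hy.1
    have h2 := hy'.2
    rw [hy.2] at h2
    exact Prod.ext ((hcol s x.2).1 h2) hy.2
  have dLsLs : ∀ s ∈ Finset.univ, ∀ t ∈ (Finset.univ : Finset (Fin c)), s ≠ t →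
      Disjoint (Ls s) (Ls t) := by
    intro s _ t _ hst
    rw [Finset.disjoint_left]
    intro y hy hy'
    rw [memLs] at hy hy'
    exact hy.1 (horth s t hst (Prod.ext hy.2 hy'.2))
  have hSplit : (Finset.univ.filter fun y : Fin p × Fin p =>
        y ≠ x ∧ (y.1 = x.1 ∨ y.2 = x.2 ∨ ∃ s, L s y.1 y.2 = L s x.1 x.2))
      = (R ∪ C) ∪ Finset.univ.biUnion Ls := by
    ext y
    simp only [Finset.mem_filter, Finset.mem_univ, true_and, Finset.mem_union,
      Finset.mem_biUnion, memR, memC, memLs]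
    tauto
  have card2 : (Finset.univ.filter fun y : Fin p × Fin p =>
        y ≠ x ∧ (y.1 = x.1 ∨ y.2 = x.2 ∨ ∃ s, L s y.1 y.2 = L s x.1 x.2)).card
      = (c + 2) * (p - 1) := by
    rw [hSplit]
    have dU : Disjoint (R ∪ C) (Finset.univ.biUnion Ls) := by
      rw [Finset.disjoint_union_left]
      constructor
      · rw [Finset.disjoint_biUnion_right]; intro s _; exact dRLs s
      · rw [Finset.disjoint_biUnion_right]; intro s _; exact dCLs s
    rw [Finset.card_union_of_disjoint dU, Finset.card_union_of_disjoint dRC,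
      Finset.card_biUnion dLsLs, cardR, cardC]
    have : ∑ s : Fin c, (Ls s).card = c * (p - 1) := by
      rw [Finset.sum_congr rfl (fun s _ => cardLs s)]
      simp [Finset.sum_const, mul_comm]
    rw [this]; ring
  refine ⟨card2, ?_⟩
  have hsum : (Finset.univ.filter fun y : Fin p × Fin p =>
        y ≠ x ∧ (y.1 = x.1 ∨ y.2 = x.2 ∨ ∃ s, L s y.1 y.2 = L s x.1 x.2)).card
      + (Finset.univ.filter fun y : Fin p × Fin p =>
        y ≠ x ∧ ¬(y.1 = x.1 ∨ y.2 = x.2 ∨ ∃ s, L s y.1 y.2 = L s x.1 x.2)).card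
      = (Finset.univ.filter fun y : Fin p × Fin p => y ≠ x).card := by
    rw [← Finset.filter_filter, ← Finset.filter_filter,
      Finset.card_filter_add_card_filter_not]
  have hcardne : (Finset.univ.filter fun y : Fin p × Fin p => y ≠ x).card = p * p - 1 := by
    have : (Finset.univ.filter fun y : Fin p × Fin p => y ≠ x)
        = Finset.univ.erase x := by
      ext y; simp [Finset.mem_erase]
    rw [this, Finset.card_erase_of_mem (Finset.mem_univ _), Finset.card_univ]
    simp
  rw [card2, hcardne] at hsum
  -- arithmetic
  obtain ⟨d, hd⟩ : ∃ d, p - 1 = c + d := ⟨p - 1 - c, by omega⟩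
  have hpd : p = c + d + 1 := by omega
  have h1 : p - 1 - c = d := by omega
  subst hpd
  rw [hd] at hsum ⊢
  have h2 : c + d - c = d := by omega
  rw [h2]
  have key : (c + d + 1) * (c + d + 1) - 1 = (c + 2) * (c + d) + (c + d) * d := by
    have h3 : (c + d + 1) * (c + d + 1) = ((c + 2) * (c + d) + (c + d) * d) + 1 := by ring
    omega
  rw [key] at hsum
  exact Nat.add_left_cancel hsum
end
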